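/- Fix a primitive vector u ∈ ℤ². (i) For all nonempty compact convex sets K, L ⊆ ℝ², if w_u(K) = w_u(L) = 0 then V(K,L) = 0. (ii) For every triple (w₁, v, w₂) ∈ ℝ≥0³ with w₁ + w₂ > 0, there exist nonempty compact convex sets K, L ⊆ ℝ² (which can be taken to be line segments) such that w_u(K) = w₁, V(K,L) = v, and w_u(L) = w₂. -/

import Mathlib

open MeasureTheory Pointwise

/-- Normalized mixed area of two compact convex sets in ℝ². -/
noncomputable def mixedArea (K L : Set (ℝ × ℝ)) : ℝ :=
  (volume (K + L)).toReal - (volume K).toReal - (volume L).toReal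

/-- The width of a set `K ⊆ ℝ²` in the direction `u ∈ ℤ²`. -/
noncomputable def latticeWidth (u : ℤ × ℤ) (K : Set (ℝ × ℝ)) : ℝ :=
  sSup ((fun x : ℝ × ℝ => x.1 * u.1 + x.2 * u.2) '' K) -
    sInf ((fun x : ℝ × ℝ => x.1 * u.1 + x.2 * u.2) '' K)

/-!
If both widths in direction `u ≠ 0` vanish, `K` and `L` lie on lines `⟨x, u⟩ = c` and `⟨x, u⟩ = d`,
so `K + L` lies on `⟨x, u⟩ = c + d` and all three sets are Lebesgue-null. Conversely, the segments
`[0, a]` and `[0, b]` have widths `|⟨a, u⟩|` and `|⟨b, u⟩|`, and their mixed area is the area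
`|det (a, b)|` of the parallelogram `[0, a] + [0, b]`. Since `u ≠ 0`, the values `⟨a, u⟩`,
`⟨b, u⟩` and `det (a, b)` can be prescribed independently as long as `(w₁, w₂) ≠ 0`.
-/

theorem MeasureTheory.Measure.addHaar_preimage_singleton {E : Type*} [NormedAddCommGroup E]
    [NormedSpace ℝ E] [MeasurableSpace E] [BorelSpace E] [FiniteDimensional ℝ E] (μ : Measure E)
    [μ.IsAddHaarMeasure] {f : E →ₗ[ℝ] ℝ} (hf : f ≠ 0) (c : ℝ) : μ (f ⁻¹' {c}) = 0 := by
  have hcoe : f ⁻¹' {c} = ((affineSpan ℝ {c}).comap f.toAffineMap : Set E) := by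
    simp [AffineSubspace.coe_comap]
  rw [hcoe]
  refine Measure.addHaar_affineSubspace μ _ fun htop => hf ?_
  have hconst (x : E) : f x = c := by
    have hx : x ∈ ((affineSpan ℝ {c}).comap f.toAffineMap : Set E) := by
      rw [htop]; exact Set.mem_univ x
    rwa [← hcoe] at hx
  ext x
  simpa [(hconst 0).symm] using hconst x

theorem subset_singleton_csSup_of_csSup_eq_csInf {α : Type*} [ConditionallyCompleteLattice α]
    {s : Set α} (h₁ : BddAbove s) (h₂ : BddBelow s) (h : sSup s = sInf s) : s ⊆ {sSup s} :=
  fun _ hx => le_antisymm (le_csSup h₁ hx) (h ▸ csInf_le h₂ hx)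

theorem isCompact_segment {E : Type*} [AddCommGroup E] [Module ℝ E] [TopologicalSpace E]
    [IsTopologicalAddGroup E] [ContinuousSMul ℝ E] (x y : E) : IsCompact (segment ℝ x y) := by
  rw [segment_eq_image']
  exact isCompact_Icc.image (by fun_prop)

namespace ContinuousDiagram

noncomputable def pairing (u : ℤ × ℤ) : ℝ × ℝ →ₗ[ℝ] ℝ where
  toFun x := x.1 * u.1 + x.2 * u.2
  map_add' x y := by simp only [Prod.fst_add, Prod.snd_add]; ring
  map_smul' c x := by simp only [Prod.smul_fst, Prod.smul_snd, smul_eq_mul, RingHom.id_apply]; ring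

theorem pairing_apply (u : ℤ × ℤ) (x : ℝ × ℝ) : pairing u x = x.1 * u.1 + x.2 * u.2 := rfl

theorem latticeWidth_eq (u : ℤ × ℤ) (K : Set (ℝ × ℝ)) :
    latticeWidth u K = sSup (pairing u '' K) - sInf (pairing u '' K) := rfl

def cross (a b : ℝ × ℝ) : ℝ := a.1 * b.2 - a.2 * b.1

theorem normSq_pos {u : ℤ × ℤ} (hu : u ≠ 0) : 0 < (u.1 : ℝ) ^ 2 + (u.2 : ℝ) ^ 2 := by
  have : (u.1 : ℝ) ≠ 0 ∨ (u.2 : ℝ) ≠ 0 := by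
    by_contra! h
    exact hu (Prod.ext (by exact_mod_cast h.1) (by exact_mod_cast h.2))
  rcases this with h | h <;> positivity

theorem pairing_ne_zero {u : ℤ × ℤ} (hu : u ≠ 0) : pairing u ≠ 0 := fun h => by
  have := congr($h ((u.1 : ℝ), (u.2 : ℝ)))
  simp only [pairing_apply, LinearMap.zero_apply] at this
  nlinarith [normSq_pos hu]

theorem exists_subset_pairing_preimage {u : ℤ × ℤ} {K : Set (ℝ × ℝ)} (hK : IsCompact K)
    (hw : latticeWidth u K = 0) : ∃ c, K ⊆ pairing u ⁻¹' {c} := by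
  have himg : IsCompact (pairing u '' K) := hK.image (pairing u).continuous_of_finiteDimensional
  rw [latticeWidth_eq, sub_eq_zero] at hw
  exact ⟨_, Set.image_subset_iff.mp
    (subset_singleton_csSup_of_csSup_eq_csInf himg.bddAbove himg.bddBelow hw)⟩

theorem mixedArea_eq_zero_of_latticeWidth_eq_zero {u : ℤ × ℤ} (hu : u ≠ 0)
    {K L : Set (ℝ × ℝ)} (hK : IsCompact K) (hL : IsCompact L)
    (hwK : latticeWidth u K = 0) (hwL : latticeWidth u L = 0) : mixedArea K L = 0 := by
  obtain ⟨c, hKc⟩ := exists_subset_pairing_preimage hK hwK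
  obtain ⟨d, hLd⟩ := exists_subset_pairing_preimage hL hwL
  have hKL : K + L ⊆ pairing u ⁻¹' {c + d} := by
    rintro _ ⟨x, hx, y, hy, rfl⟩
    simp_all [Set.subset_def]
  have hnull (e : ℝ) := volume.addHaar_preimage_singleton (pairing_ne_zero hu) e
  simp [mixedArea, measure_mono_null hKc (hnull c), measure_mono_null hLd (hnull d),
    measure_mono_null hKL (hnull (c + d))]

theorem latticeWidth_segment (u : ℤ × ℤ) (p q : ℝ × ℝ) :
    latticeWidth u (segment ℝ p q) = |pairing u q - pairing u p| := by
  rw [latticeWidth_eq, ← (pairing u).coe_toAffineMap, image_segment, segment_eq_uIcc, Set.uIcc,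
    csSup_Icc min_le_max, csInf_Icc min_le_max, max_sub_min_eq_abs]

theorem segment_add_segment_eq_image (a b : ℝ × ℝ) :
    segment ℝ 0 a + segment ℝ 0 b = (fun t : ℝ × ℝ => t.1 • a + t.2 • b) '' Set.Icc 0 1 := by
  rw [segment_eq_image', segment_eq_image', ← Set.image2_add, Set.image2_image_left,
    Set.image2_image_right, ← Set.image_prod, Set.Icc_prod_eq]
  simp

theorem volume_segment_add_segment (a b : ℝ × ℝ) :
    volume (segment ℝ 0 a + segment ℝ 0 b) = ENNReal.ofReal |cross a b| := by
  let T : ℝ × ℝ →ₗ[ℝ] ℝ × ℝ :=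
    Matrix.toLin (Module.Basis.finTwoProd ℝ) (Module.Basis.finTwoProd ℝ) !![a.1, b.1; a.2, b.2]
  have hT : ⇑T = fun t : ℝ × ℝ => t.1 • a + t.2 • b := by
    ext t <;> simp [T, Matrix.toLin_finTwoProd_apply, mul_comm]
  have hdet : LinearMap.det T = cross a b := by
    simp only [T, LinearMap.det_toLin, Matrix.det_fin_two_of, cross]
    ring
  have hsquare : volume (Set.Icc (0 : ℝ × ℝ) 1) = 1 := by
    rw [Set.Icc_prod_eq, Measure.volume_eq_prod, Measure.prod_prod]
    simp
  rw [segment_add_segment_eq_image, ← hT, Measure.addHaar_image_linearMap, hdet, hsquare, mul_one]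

theorem volume_segment (a : ℝ × ℝ) : volume (segment ℝ 0 a) = 0 := by
  simpa [cross] using volume_segment_add_segment a 0

theorem mixedArea_segment_segment (a b : ℝ × ℝ) :
    mixedArea (segment ℝ 0 a) (segment ℝ 0 b) = |cross a b| := by
  simp [mixedArea, volume_segment_add_segment, volume_segment]

theorem exists_pairing_eq_pairing_eq_cross_eq {u : ℤ × ℤ} (hu : u ≠ 0) {w₁ w₂ : ℝ}
    (hw : w₁ ≠ 0 ∨ w₂ ≠ 0) (v : ℝ) :
    ∃ a b : ℝ × ℝ, pairing u a = w₁ ∧ pairing u b = w₂ ∧ cross a b = v := by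
  obtain ⟨s, t, hst⟩ : ∃ s t : ℝ, w₁ * t - w₂ * s = v := by
    rcases hw with h | h
    · exact ⟨0, v / w₁, by field_simp; ring⟩
    · exact ⟨-(v / w₂), 0, by field_simp; ring⟩
  have hN := (normSq_pos hu).ne'
  set N := (u.1 : ℝ) ^ 2 + (u.2 : ℝ) ^ 2
  -- `a = w₁ u / |u|² + s u⊥` and `b = w₂ u / |u|² + t u⊥`, so that `cross a b = w₁ t - w₂ s`.
  refine ⟨(w₁ * u.1 / N - s * u.2, w₁ * u.2 / N + s * u.1),
    (w₂ * u.1 / N - t * u.2, w₂ * u.2 / N + t * u.1), ?_, ?_, ?_⟩ <;>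
    simp only [pairing_apply, cross, ← hst] <;> field_simp <;> ring

end ContinuousDiagram

open ContinuousDiagram in
/-- The "continuous diagram": (i) if two nonempty compact convex sets both have width 0
in direction `u`, their mixed area is 0; (ii) every triple `(w₁,v,w₂)` of non-negative
reals with `w₁ + w₂ > 0` is realized by a pair of line segments. -/
theorem continuous_diagram (u : ℤ × ℤ) (hu : Int.gcd u.1 u.2 = 1) :
    (∀ K L : Set (ℝ × ℝ), K.Nonempty → L.Nonempty → IsCompact K → IsCompact L →
      Convex ℝ K → Convex ℝ L →
      latticeWidth u K = 0 → latticeWidth u L = 0 → mixedArea K L = 0) ∧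
    (∀ w₁ v w₂ : ℝ, 0 ≤ w₁ → 0 ≤ v → 0 ≤ w₂ → 0 < w₁ + w₂ →
      ∃ K L : Set (ℝ × ℝ),
        (∃ p q : ℝ × ℝ, K = segment ℝ p q) ∧ (∃ p q : ℝ × ℝ, L = segment ℝ p q) ∧
        K.Nonempty ∧ L.Nonempty ∧ IsCompact K ∧ IsCompact L ∧ Convex ℝ K ∧ Convex ℝ L ∧
        latticeWidth u K = w₁ ∧ mixedArea K L = v ∧ latticeWidth u L = w₂) := by
  have hu₀ : u ≠ 0 := by
    rintro rfl
    simp at hu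
  refine ⟨fun K L _ _ hK hL _ _ => mixedArea_eq_zero_of_latticeWidth_eq_zero hu₀ hK hL, ?_⟩
  intro w₁ v w₂ hw₁ hv hw₂ hsum
  have hw : w₁ ≠ 0 ∨ w₂ ≠ 0 := by
    by_contra! h
    linarith [h.1, h.2]
  obtain ⟨a, b, ha, hb, hab⟩ := exists_pairing_eq_pairing_eq_cross_eq hu₀ hw v
  refine ⟨segment ℝ 0 a, segment ℝ 0 b, ⟨0, a, rfl⟩, ⟨0, b, rfl⟩, ⟨0, left_mem_segment ℝ 0 a⟩,
    ⟨0, left_mem_segment ℝ 0 b⟩, isCompact_segment 0 a, isCompact_segment 0 b, convex_segment 0 a,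
    convex_segment 0 b, ?_, ?_, ?_⟩
  · rw [latticeWidth_segment, map_zero, sub_zero, ha, abs_of_nonneg hw₁]
  · rw [mixedArea_segment_segment, hab, abs_of_nonneg hv]
  · rw [latticeWidth_segment, map_zero, sub_zero, hb, abs_of_nonneg hw₂]
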